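/- For all reals α₁, α₂ with 1 ≤ α₁ < α₂ ≤ 2 and every integer k, the fractional centred difference coefficients are strictly monotone in α: if |k| ≠ 1 then g_k^{(α₁)} < g_k^{(α₂)}, while if |k| = 1 then g_k^{(α₁)} > g_k^{(α₂)}. Here at the endpoint α = 2 the coefficients are understood as their limiting values g_0^{(2)} = 2, g_{±1}^{(2)} = −1, and g_k^{(2)} = 0 for |k| ≥ 2. -/

import Mathlib

open Real

/-- The fractional centred difference coefficients
`g_k^{(α)} = ((−1)^k Γ(α+1)) / (Γ(α/2 − k + 1) Γ(α/2 + k + 1))`. -/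
noncomputable def fracCoeff (α : ℝ) (k : ℤ) : ℝ :=
  ((-1 : ℝ) ^ k * Real.Gamma (α + 1)) /
    (Real.Gamma (α / 2 - (k : ℝ) + 1) * Real.Gamma (α / 2 + (k : ℝ) + 1))

/-- The fractional centred difference coefficients extended to `α = 2` by their
limiting values: `g_0^{(2)} = 2`, `g_{±1}^{(2)} = −1`, `g_k^{(2)} = 0` for `|k| ≥ 2`. -/
noncomputable def fracCoeffExt (α : ℝ) (k : ℤ) : ℝ :=
  if α = 2 then (if k = 0 then 2 else if |k| = 1 then -1 else 0) else fracCoeff α k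

/-!
Put `s = α / 2` and `K(s) = ∫₀¹ (4t(1-t))^s dt = 4^s Γ(s+1)² / Γ(2s+2)` (Euler's Beta integral).
Then `g₀ = 2^α / (α + 1) / K(s)`, and the recurrence `g_{k+1} = g_k (k - s) / (k + 1 + s)` gives
`g₁ = -g₀ α / (α + 2)` and `g₂ = -2^α W(s) / K(s)` with `W(s) = s(1-s) / ((2s+1)(s+1)(s+2))`.
As `K` decreases and `2^α / (α + 1)` increases for `α ≥ 1`, `g₀` increases and `g₁` decreases.
For `g₂` the decay of `W` has to beat the growth of `2^α / K`; this needs the quantitative bound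
`K(x) - K(y) ≤ 2(y - x)(1 - K(1/2)) = 2(y - x)(1 - π/4)`, which comes from the pointwise estimate
`v^a - v^b ≤ (b - a)(1 - v)` applied to `v = (4t(1-t))^{1/2}`.
For `k ≥ 3` the recurrence factor is positive and decreasing in `α`, so it carries the
monotonicity of the non-positive `g₂` over to all higher coefficients.
-/

open Set MeasureTheory

lemma integral_rpow_mul_one_sub_rpow {a b : ℝ} (ha : 0 < a) (hb : 0 < b) :
    ∫ t in (0:ℝ)..1, t ^ (a - 1) * (1 - t) ^ (b - 1) = Gamma a * Gamma b / Gamma (a + b) := by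
  have h := Complex.Gamma_mul_Gamma_eq_betaIntegral (s := (a : ℂ)) (t := (b : ℂ))
    (by simpa using ha) (by simpa using hb)
  have hβ : Complex.betaIntegral a b
      = ((∫ t in (0:ℝ)..1, t ^ (a - 1) * (1 - t) ^ (b - 1) : ℝ) : ℂ) := by
    rw [Complex.betaIntegral, ← intervalIntegral.integral_ofReal]
    refine intervalIntegral.integral_congr fun t ht => ?_
    rw [uIcc_of_le zero_le_one] at ht
    rw [Complex.ofReal_mul, Complex.ofReal_cpow ht.1, Complex.ofReal_cpow (by linarith [ht.2])]
    push_cast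
    ring
  rw [hβ, ← Complex.ofReal_add, Complex.Gamma_ofReal, Complex.Gamma_ofReal,
    Complex.Gamma_ofReal, ← Complex.ofReal_mul, ← Complex.ofReal_mul] at h
  rw [eq_div_iff (Gamma_pos_of_pos (add_pos ha hb)).ne', mul_comm]
  exact_mod_cast h.symm

/-- The factor `4` puts the integrand in `[0, 1]`, which makes this antitone in `s`. -/
noncomputable def scaledCentralBeta (s : ℝ) : ℝ :=
  ∫ t in (0:ℝ)..1, (4 * (t * (1 - t))) ^ s

lemma four_mul_mul_one_sub_mem_Icc {t : ℝ} (ht : t ∈ Icc (0:ℝ) 1) :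
    4 * (t * (1 - t)) ∈ Icc (0:ℝ) 1 :=
  ⟨by nlinarith [ht.1, ht.2], by nlinarith [sq_nonneg (2 * t - 1)]⟩

lemma intervalIntegrable_four_mul_mul_one_sub_rpow {s : ℝ} (hs : 0 ≤ s) :
    IntervalIntegrable (fun t : ℝ => (4 * (t * (1 - t))) ^ s) volume 0 1 :=
  ((continuous_rpow_const hs).comp (by fun_prop)).intervalIntegrable 0 1

lemma scaledCentralBeta_eq_Gamma {s : ℝ} (hs : -1 < s) :
    scaledCentralBeta s = 4 ^ s * (Gamma (s + 1) * Gamma (s + 1) / Gamma (2 * s + 2)) := by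
  have hpow : scaledCentralBeta s =
      ∫ t in (0:ℝ)..1, 4 ^ s * (t ^ (s + 1 - 1) * (1 - t) ^ (s + 1 - 1)) := by
    refine intervalIntegral.integral_congr fun t ht => ?_
    rw [uIcc_of_le zero_le_one] at ht
    simp only [add_sub_cancel_right]
    rw [mul_rpow (by norm_num) (mul_nonneg ht.1 (by linarith [ht.2])),
      mul_rpow ht.1 (by linarith [ht.2])]
  rw [hpow, intervalIntegral.integral_const_mul,
    integral_rpow_mul_one_sub_rpow (by linarith) (by linarith)]
  ring_nf

lemma scaledCentralBeta_pos {s : ℝ} (hs : -1 < s) : 0 < scaledCentralBeta s := by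
  have := Gamma_pos_of_pos (by linarith : 0 < s + 1)
  have := Gamma_pos_of_pos (by linarith : 0 < 2 * s + 2)
  rw [scaledCentralBeta_eq_Gamma hs]
  positivity

lemma scaledCentralBeta_one : scaledCentralBeta 1 = 2 / 3 := by
  rw [scaledCentralBeta_eq_Gamma (by norm_num)]
  have h4 : Gamma 4 = 6 := by
    rw [show (4 : ℝ) = (3 : ℕ) + 1 by norm_num, Gamma_nat_eq_factorial]
    norm_num [Nat.factorial]
  norm_num [Gamma_two, h4]

lemma scaledCentralBeta_one_half : scaledCentralBeta (1 / 2) = π / 4 := by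
  rw [scaledCentralBeta_eq_Gamma (by norm_num)]
  have h32 : Gamma (1 / 2 + 1) = √π / 2 := by
    rw [Gamma_add_one (by norm_num), Gamma_one_half_eq]; ring
  have h3 : Gamma (2 * (1 / 2) + 2) = 2 := by
    rw [show (2 * (1 / 2) + 2 : ℝ) = (2 : ℕ) + 1 by norm_num, Gamma_nat_eq_factorial]
    norm_num [Nat.factorial]
  have h4 : (4 : ℝ) ^ (1 / 2 : ℝ) = 2 := by
    rw [show (4 : ℝ) = 2 ^ (2 : ℝ) by norm_num, ← rpow_mul (by norm_num)]; norm_num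
  rw [h32, h3, h4]
  nlinarith [mul_self_sqrt pi_pos.le]

lemma scaledCentralBeta_antitoneOn : AntitoneOn scaledCentralBeta (Ici 0) := by
  intro x hx y hy hxy
  refine intervalIntegral.integral_mono_on zero_le_one
    (intervalIntegrable_four_mul_mul_one_sub_rpow hy)
    (intervalIntegrable_four_mul_mul_one_sub_rpow hx) fun t ht => ?_
  obtain ⟨hu0, hu1⟩ := four_mul_mul_one_sub_mem_Icc ht
  exact rpow_le_rpow_of_exponent_ge' hu0 hu1 hx hxy

lemma rpow_sub_rpow_le_mul_one_sub {v a b : ℝ} (hv0 : 0 ≤ v) (hv1 : v ≤ 1) (ha : 1 ≤ a)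
    (hab : a ≤ b) : v ^ a - v ^ b ≤ (b - a) * (1 - v) := by
  rcases hv0.eq_or_lt with rfl | hv
  · rw [zero_rpow (by linarith), zero_rpow (by linarith)]
    nlinarith
  have hlog : log v ≤ 0 := log_nonpos hv0 hv1
  have hexp : 1 - v ^ (b - a) ≤ (b - a) * -log v := by
    rw [rpow_def_of_pos hv]
    linarith [add_one_le_exp (log v * (b - a))]
  have hvlog : v - 1 ≤ v * log v := by
    have := mul_le_mul_of_nonneg_left (one_sub_inv_le_log_of_pos hv) hv0
    rwa [mul_sub, mul_one, mul_inv_cancel₀ hv.ne'] at this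
  calc v ^ a - v ^ b = v ^ a * (1 - v ^ (b - a)) := by
        rw [mul_sub, mul_one, ← rpow_add hv, add_sub_cancel]
    _ ≤ v ^ a * ((b - a) * -log v) :=
        mul_le_mul_of_nonneg_left hexp (rpow_nonneg hv0 a)
    _ ≤ v * ((b - a) * -log v) := by
        refine mul_le_mul_of_nonneg_right ?_ (mul_nonneg (by linarith) (by linarith))
        simpa using rpow_le_rpow_of_exponent_ge hv hv1 ha
    _ ≤ (b - a) * (1 - v) := by nlinarith

lemma scaledCentralBeta_sub_le {x y : ℝ} (hx : 1 / 2 ≤ x) (hxy : x ≤ y) :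
    scaledCentralBeta x - scaledCentralBeta y ≤ 2 * (y - x) * (1 - π / 4) := by
  have hint : ∀ {s : ℝ}, 1 / 2 ≤ s →
      IntervalIntegrable (fun t : ℝ => (4 * (t * (1 - t))) ^ s) volume 0 1 :=
    fun hs => intervalIntegrable_four_mul_mul_one_sub_rpow (by linarith)
  have hrhs : 2 * (y - x) * (1 - π / 4) =
      ∫ t in (0:ℝ)..1, 2 * (y - x) * (1 - (4 * (t * (1 - t))) ^ (1 / 2 : ℝ)) := by
    rw [intervalIntegral.integral_const_mul, intervalIntegral.integral_sub intervalIntegrable_const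
      (hint le_rfl), ← scaledCentralBeta, scaledCentralBeta_one_half]
    simp
  rw [scaledCentralBeta, scaledCentralBeta, ← intervalIntegral.integral_sub (hint hx)
    (hint (hx.trans hxy)), hrhs]
  refine intervalIntegral.integral_mono_on zero_le_one ((hint hx).sub (hint (hx.trans hxy)))
    ((intervalIntegrable_const.sub (hint le_rfl)).const_mul _) fun t ht => ?_
  obtain ⟨hu0, hu1⟩ := four_mul_mul_one_sub_mem_Icc ht
  have key := rpow_sub_rpow_le_mul_one_sub (rpow_nonneg hu0 (1 / 2))
    (rpow_le_one hu0 hu1 (by norm_num)) (by linarith : 1 ≤ 2 * x) (by linarith : 2 * x ≤ 2 * y)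
  rwa [← rpow_mul hu0, ← rpow_mul hu0, show 1 / 2 * (2 * x) = x by ring,
    show 1 / 2 * (2 * y) = y by ring, show 2 * y - 2 * x = 2 * (y - x) by ring] at key

lemma scaledCentralBeta_lt_mul {x y : ℝ} (hx : 1 / 2 ≤ x) (hxy : x < y) (hy : y ≤ 1) :
    scaledCentralBeta x < scaledCentralBeta y * (1 + 33 / 50 * (y - x)) := by
  have hsub := scaledCentralBeta_sub_le hx hxy.le
  have hKy : 2 / 3 ≤ scaledCentralBeta y := scaledCentralBeta_one ▸
    scaledCentralBeta_antitoneOn (by simp only [mem_Ici]; linarith) (by norm_num) hy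
  -- `3 (1 - π/4) < 33/50` as soon as `π > 3.12`
  nlinarith [pi_gt_d2]

lemma fracCoeff_neg (α : ℝ) (k : ℤ) : fracCoeff α (-k) = fracCoeff α k := by
  simp only [fracCoeff, Int.cast_neg, zpow_neg, sub_neg_eq_add]
  rcases Int.even_or_odd k with hk | hk
  · rw [hk.neg_one_zpow, inv_one, ← sub_eq_add_neg, mul_comm (Gamma _)]
  · rw [hk.neg_one_zpow, inv_neg, inv_one, ← sub_eq_add_neg, mul_comm (Gamma _)]

lemma fracCoeff_natAbs (α : ℝ) (k : ℤ) : fracCoeff α k.natAbs = fracCoeff α k := by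
  rcases Int.natAbs_eq k with hk | hk
  · rw [← hk]
  · rw [hk, fracCoeff_neg, Int.natAbs_neg, Int.natAbs_natCast]

lemma fracCoeff_add_one {α : ℝ} {k : ℤ} (h : α / 2 + k + 1 ≠ 0) :
    fracCoeff α (k + 1) = fracCoeff α k * ((k - α / 2) / (k + 1 + α / 2)) := by
  have hup : Gamma (α / 2 + (k + 1 : ℤ) + 1) = (α / 2 + k + 1) * Gamma (α / 2 + k + 1) := by
    rw [← Gamma_add_one h]; push_cast; ring_nf
  have hdown : α / 2 - ((k + 1 : ℤ) : ℝ) + 1 = α / 2 - k := by push_cast; ring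
  rw [fracCoeff, fracCoeff, hup, hdown, zpow_add_one₀ (by norm_num)]
  by_cases hk : α / 2 - k = 0
  · rw [hk, zero_add, Gamma_zero, show (k : ℝ) - α / 2 = 0 by linarith]
    simp
  rw [Gamma_add_one hk]
  rcases eq_or_ne (Gamma (α / 2 - k)) 0 with hA | hA
  · simp [hA]
  rcases eq_or_ne (Gamma (α / 2 + k + 1)) 0 with hB | hB
  · simp [hB]
  have h' : (k : ℝ) + 1 + α / 2 ≠ 0 := by contrapose! h; linarith
  rw [div_mul_div_comm, div_eq_div_iff (mul_ne_zero hA (mul_ne_zero h hB))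
    (mul_ne_zero (mul_ne_zero (mul_ne_zero hk hA) hB) h')]
  ring

lemma fracCoeff_zero_eq {α : ℝ} (hα : -1 < α) :
    fracCoeff α 0 = 2 ^ α / (α + 1) / scaledCentralBeta (α / 2) := by
  have hA := Gamma_pos_of_pos (by linarith : 0 < α / 2 + 1)
  have hB := Gamma_pos_of_pos (by linarith : 0 < α + 1)
  have := rpow_pos_of_pos two_pos α
  have : 0 < α + 1 := by linarith
  have h4 : (4 : ℝ) ^ (α / 2) = 2 ^ α := by
    rw [show (4 : ℝ) = 2 ^ (2 : ℝ) by norm_num, ← rpow_mul (by norm_num)]; ring_nf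
  rw [scaledCentralBeta_eq_Gamma (by linarith), h4, show 2 * (α / 2) + 2 = α + 1 + 1 by ring,
    Gamma_add_one (show α + 1 ≠ 0 by linarith), fracCoeff]
  simp only [Int.cast_zero, zpow_zero, sub_zero, add_zero, one_mul]
  generalize Gamma (α / 2 + 1) = A at *
  generalize Gamma (α + 1) = B at *
  field_simp

lemma fracCoeff_zero_pos {α : ℝ} (hα : -1 < α) : 0 < fracCoeff α 0 := by
  have := scaledCentralBeta_pos (by linarith : -1 < α / 2)
  have : 0 < α + 1 := by linarith
  rw [fracCoeff_zero_eq hα]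
  positivity

lemma fracCoeff_one_eq {α : ℝ} (hα : α ≠ -2) :
    fracCoeff α 1 = -(fracCoeff α 0 * (α / (α + 2))) := by
  have h := fracCoeff_add_one (α := α) (k := 0) (by contrapose! hα; linarith)
  have : α + 2 ≠ 0 := by contrapose! hα; linarith
  have hratio : (0 - α / 2) / (0 + 1 + α / 2) = -(α / (α + 2)) := by
    rw [← neg_div, div_eq_div_iff (by contrapose! hα; linarith) this]; ring
  rw [zero_add] at h
  rw [h, Int.cast_zero, hratio, mul_neg]

lemma two_rpow_div_add_one_strictMonoOn :
    StrictMonoOn (fun α : ℝ => 2 ^ α / (α + 1)) (Ici 1) := by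
  intro a ha b hb hab
  simp only [mem_Ici] at ha hb
  have hexp : 1 + (b - a) / 2 < 2 ^ (b - a) := by
    rw [rpow_def_of_pos two_pos]
    nlinarith [add_one_lt_exp (mul_pos (log_pos one_lt_two) (sub_pos.2 hab)).ne', log_two_gt_d9]
  have hsplit : (2 : ℝ) ^ b = 2 ^ a * 2 ^ (b - a) := by rw [← rpow_add two_pos]; ring_nf
  have := rpow_pos_of_pos two_pos a
  rw [div_lt_div_iff₀ (by linarith) (by linarith), hsplit]
  nlinarith [mul_lt_mul_of_pos_left hexp (by positivity : 0 < 2 ^ a * (a + 1)),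
    mul_nonneg this.le (mul_nonneg (sub_nonneg.2 hab.le) (sub_nonneg.2 ha))]

lemma fracCoeff_zero_strictMonoOn : StrictMonoOn (fun α => fracCoeff α 0) (Ici 1) := by
  intro a ha b hb hab
  simp only [mem_Ici] at ha hb
  have hKa := scaledCentralBeta_pos (by linarith : -1 < a / 2)
  have hKb := scaledCentralBeta_pos (by linarith : -1 < b / 2)
  have : 0 < b + 1 := by linarith
  simp only [fracCoeff_zero_eq (by linarith : -1 < a), fracCoeff_zero_eq (by linarith : -1 < b)]
  calc 2 ^ a / (a + 1) / scaledCentralBeta (a / 2)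
      < 2 ^ b / (b + 1) / scaledCentralBeta (a / 2) :=
        div_lt_div_of_pos_right (two_rpow_div_add_one_strictMonoOn ha hb hab) hKa
    _ ≤ 2 ^ b / (b + 1) / scaledCentralBeta (b / 2) :=
        div_le_div_of_nonneg_left (by positivity) hKb <| scaledCentralBeta_antitoneOn
          (by simp only [mem_Ici]; linarith) (by simp only [mem_Ici]; linarith) (by linarith)

lemma fracCoeff_one_strictAntiOn : StrictAntiOn (fun α => fracCoeff α 1) (Ici 1) := by
  intro a ha b hb hab
  simp only [mem_Ici] at ha hb
  simp only [fracCoeff_one_eq (by linarith : a ≠ -2), fracCoeff_one_eq (by linarith : b ≠ -2),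
    neg_lt_neg_iff]
  have hratio : a / (a + 2) ≤ b / (b + 2) := by
    rw [div_le_div_iff₀ (by linarith) (by linarith)]; linarith
  exact mul_lt_mul (fracCoeff_zero_strictMonoOn ha hb hab) hratio (by positivity)
    (fracCoeff_zero_pos (by linarith)).le

noncomputable def fracCoeffTwoFactor (s : ℝ) : ℝ :=
  s * (1 - s) / ((2 * s + 1) * ((s + 1) * (s + 2)))

lemma fracCoeffTwoFactor_pos {s : ℝ} (h0 : 0 < s) (h1 : s < 1) : 0 < fracCoeffTwoFactor s := by
  have : 0 < 1 - s := by linarith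
  unfold fracCoeffTwoFactor
  positivity

lemma fracCoeff_two_eq {α : ℝ} (hα : -1 < α) :
    fracCoeff α 2 = -(2 ^ α * fracCoeffTwoFactor (α / 2) / scaledCentralBeta (α / 2)) := by
  have h := fracCoeff_add_one (α := α) (k := 1) (by push_cast; linarith)
  have := (scaledCentralBeta_pos (by linarith : -1 < α / 2)).ne'
  have : α + 1 ≠ 0 := by linarith
  have : α + 2 ≠ 0 := by linarith
  rw [show ((1 : ℤ) + 1) = 2 by norm_num] at h
  rw [h, fracCoeff_one_eq (by linarith), fracCoeff_zero_eq hα, fracCoeffTwoFactor, Int.cast_one]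
  field_simp
  ring

-- In `a = x - 1/2 ≥ 0`, `d = y - x ∈ [0, 1/2]` the cross-multiplied difference is a non-negative
-- combination of the monomials `a ^ i * d ^ j` and of `d ^ 3 * (1/2 - d)`.
lemma fracCoeffTwoFactor_mul_le {x y : ℝ} (hx : 1 / 2 ≤ x) (hxy : x ≤ y) (hy : y ≤ 1) :
    fracCoeffTwoFactor y * (1 + 33 / 50 * (y - x)) ≤
      fracCoeffTwoFactor x * (1 - 111 / 80 * (y - x)) := by
  have ha : 0 ≤ x - 1 / 2 := by linarith
  have hd : 0 ≤ y - x := by linarith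
  have P : ∀ i j : ℕ, 0 ≤ (x - 1 / 2) ^ i * (y - x) ^ j :=
    fun i j => mul_nonneg (pow_nonneg ha i) (pow_nonneg hd j)
  have Q : 0 ≤ (y - x) ^ 3 * (1 / 2 - (y - x)) := mul_nonneg (pow_nonneg hd 3) (by linarith)
  have : 0 < x := by linarith
  have : 0 < y := by linarith
  rw [fracCoeffTwoFactor, fracCoeffTwoFactor, div_mul_eq_mul_div (y * (1 - y)),
    div_mul_eq_mul_div (x * (1 - x)),
    div_le_div_iff₀ (by positivity) (by positivity)]
  linarith [P 0 1, P 0 2, P 0 3, P 0 4, P 1 1, P 1 2, P 1 3, P 2 1, P 2 2, P 2 3, P 2 4,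
    P 3 1, P 3 2, P 3 3, P 4 1, P 4 2, P 5 1, Q]

lemma two_rpow_mul_one_sub_le_one {c e : ℝ} (hc : log 2 ≤ c) (he : 0 ≤ e) :
    2 ^ e * (1 - c * e) ≤ 1 := by
  rw [rpow_def_of_pos two_pos]
  calc exp (log 2 * e) * (1 - c * e) ≤ exp (log 2 * e) * exp (-(c * e)) :=
        mul_le_mul_of_nonneg_left (by linarith [add_one_le_exp (-(c * e))]) (exp_pos _).le
    _ = exp ((log 2 - c) * e) := by rw [← exp_add]; ring_nf
    _ ≤ 1 := exp_le_one_iff.2 (mul_nonpos_of_nonpos_of_nonneg (by linarith) he)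

lemma fracCoeff_two_lt {α₁ α₂ : ℝ} (h1 : 1 ≤ α₁) (h12 : α₁ < α₂) (h2 : α₂ < 2) :
    fracCoeff α₁ 2 < fracCoeff α₂ 2 := by
  have hK₁ := scaledCentralBeta_pos (by linarith : -1 < α₁ / 2)
  have hK₂ := scaledCentralBeta_pos (by linarith : -1 < α₂ / 2)
  have hW₁ := fracCoeffTwoFactor_pos (by linarith : 0 < α₁ / 2) (by linarith : α₁ / 2 < 1)
  have hW₂ := fracCoeffTwoFactor_pos (by linarith : 0 < α₂ / 2) (by linarith : α₂ / 2 < 1)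
  have hK := scaledCentralBeta_lt_mul (by linarith : 1 / 2 ≤ α₁ / 2)
    (by linarith : α₁ / 2 < α₂ / 2) (by linarith : α₂ / 2 ≤ 1)
  have hWle := fracCoeffTwoFactor_mul_le (by linarith : 1 / 2 ≤ α₁ / 2)
    (by linarith : α₁ / 2 ≤ α₂ / 2) (by linarith : α₂ / 2 ≤ 1)
  -- `111/160 > log 2`: the origin of the constant `111/80` in `fracCoeffTwoFactor_mul_le`
  have hexp := two_rpow_mul_one_sub_le_one (c := 111 / 160) (by linarith [log_two_lt_d9])
    (sub_nonneg.2 h12.le)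
  have hsplit : (2 : ℝ) ^ α₂ = 2 ^ α₁ * 2 ^ (α₂ - α₁) := by rw [← rpow_add two_pos]; ring_nf
  rw [fracCoeff_two_eq (by linarith), fracCoeff_two_eq (by linarith), neg_lt_neg_iff,
    div_lt_div_iff₀ hK₂ hK₁]
  calc 2 ^ α₂ * fracCoeffTwoFactor (α₂ / 2) * scaledCentralBeta (α₁ / 2)
      < 2 ^ α₂ * fracCoeffTwoFactor (α₂ / 2) *
          (scaledCentralBeta (α₂ / 2) * (1 + 33 / 50 * (α₂ / 2 - α₁ / 2))) :=
        mul_lt_mul_of_pos_left hK (by positivity)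
    _ = 2 ^ α₂ * scaledCentralBeta (α₂ / 2) *
          (fracCoeffTwoFactor (α₂ / 2) * (1 + 33 / 50 * (α₂ / 2 - α₁ / 2))) := by ring
    _ ≤ 2 ^ α₂ * scaledCentralBeta (α₂ / 2) *
          (fracCoeffTwoFactor (α₁ / 2) * (1 - 111 / 80 * (α₂ / 2 - α₁ / 2))) :=
        mul_le_mul_of_nonneg_left hWle (by positivity)
    _ = 2 ^ α₁ * fracCoeffTwoFactor (α₁ / 2) * scaledCentralBeta (α₂ / 2) *
          (2 ^ (α₂ - α₁) * (1 - 111 / 160 * (α₂ - α₁))) := by rw [hsplit]; ring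
    _ ≤ 2 ^ α₁ * fracCoeffTwoFactor (α₁ / 2) * scaledCentralBeta (α₂ / 2) :=
        mul_le_of_le_one_right (by positivity) hexp

lemma fracCoeff_two_natCast_eq_zero {n : ℕ} (hn : 2 ≤ n) : fracCoeff 2 n = 0 := by
  have harg : (2 : ℝ) / 2 - ((n : ℤ) : ℝ) + 1 = -((n - 2 : ℕ) : ℝ) := by
    push_cast [Nat.cast_sub hn]; ring
  rw [fracCoeff, harg, Gamma_neg_nat_eq_zero, zero_mul, div_zero]

lemma fracCoeff_two_strictMonoOn : StrictMonoOn (fun α => fracCoeff α 2) (Icc 1 2) := by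
  intro a ha b hb hab
  rcases hb.2.lt_or_eq with hb2 | rfl
  · exact fracCoeff_two_lt ha.1 hab hb2
  have := fracCoeffTwoFactor_pos (by linarith [ha.1] : 0 < a / 2) (by linarith : a / 2 < 1)
  have := scaledCentralBeta_pos (by linarith [ha.1] : -1 < a / 2)
  show fracCoeff a 2 < fracCoeff 2 ((2 : ℕ) : ℤ)
  rw [fracCoeff_two_natCast_eq_zero le_rfl, fracCoeff_two_eq (by linarith [ha.1]), neg_lt_zero]
  positivity

lemma fracCoeff_strictMonoOn_of_two_le {n : ℕ} (hn : 2 ≤ n) :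
    StrictMonoOn (fun α => fracCoeff α n) (Icc 1 2) := by
  induction n, hn using Nat.le_induction with
  | base => exact fracCoeff_two_strictMonoOn
  | succ n hn ih =>
    intro a ha b hb hab
    have hn' : (2 : ℝ) ≤ n := by exact_mod_cast hn
    have hb_nonpos : fracCoeff b n ≤ 0 :=
      fracCoeff_two_natCast_eq_zero hn ▸ ih.monotoneOn hb (right_mem_Icc.2 one_le_two) hb.2
    have hfactor : (n - b / 2) / (n + 1 + b / 2) ≤ (n - a / 2) / (n + 1 + a / 2) := by
      rw [div_le_div_iff₀ (by linarith [hb.1]) (by linarith [ha.1])]; nlinarith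
    have hfactor_pos : 0 < (n - b / 2) / (n + 1 + b / 2) :=
      div_pos (by linarith [hb.2]) (by linarith [hb.1])
    simp only [Nat.cast_succ]
    rw [fracCoeff_add_one (by push_cast; linarith [ha.1]),
      fracCoeff_add_one (by push_cast; linarith [hb.1]), Int.cast_natCast]
    calc fracCoeff a n * ((n - a / 2) / (n + 1 + a / 2))
        ≤ fracCoeff a n * ((n - b / 2) / (n + 1 + b / 2)) :=
          mul_le_mul_of_nonpos_left hfactor (by linarith [ih ha hb hab])
      _ < fracCoeff b n * ((n - b / 2) / (n + 1 + b / 2)) :=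
          mul_lt_mul_of_pos_right (ih ha hb hab) hfactor_pos

lemma fracCoeffExt_eq_fracCoeff (α : ℝ) (k : ℤ) : fracCoeffExt α k = fracCoeff α k := by
  have hzero : fracCoeff 2 0 = 2 := by
    rw [fracCoeff_zero_eq (by norm_num), div_self two_ne_zero, scaledCentralBeta_one]
    norm_num
  rw [fracCoeffExt, Int.abs_eq_natAbs]
  split_ifs with hα hk0 hk1
  · rw [hα, hk0, hzero]
  · rw [hα, ← fracCoeff_natAbs, show k.natAbs = 1 by omega, Nat.cast_one,
      fracCoeff_one_eq (by norm_num), hzero]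
    norm_num
  · rw [hα, ← fracCoeff_natAbs, fracCoeff_two_natCast_eq_zero (by omega)]
  · rfl

theorem fracCoeff_strict_mono_in_order (α₁ α₂ : ℝ) (h1 : 1 ≤ α₁) (h12 : α₁ < α₂)
    (h2 : α₂ ≤ 2) (k : ℤ) :
    (|k| ≠ 1 → fracCoeffExt α₁ k < fracCoeffExt α₂ k) ∧
    (|k| = 1 → fracCoeffExt α₂ k < fracCoeffExt α₁ k) := by
  simp only [fracCoeffExt_eq_fracCoeff, ← fracCoeff_natAbs _ k, Int.abs_eq_natAbs]
  have hα₁ : α₁ ∈ Icc 1 2 := ⟨h1, by linarith⟩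
  have hα₂ : α₂ ∈ Icc 1 2 := ⟨by linarith, h2⟩
  refine ⟨fun hk => ?_, fun hk => ?_⟩
  · obtain h0 | h2k : k.natAbs = 0 ∨ 2 ≤ k.natAbs := by omega
    · rw [h0]
      exact fracCoeff_zero_strictMonoOn hα₁.1 hα₂.1 h12
    · exact fracCoeff_strictMonoOn_of_two_le h2k hα₁ hα₂ h12
  · rw [show k.natAbs = 1 by omega]
    exact fracCoeff_one_strictAntiOn hα₁.1 hα₂.1 h12
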